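/- arXiv:1111.3242 — 4 statements merged into one kernel-verified Lean document; each statement's English description precedes it below -/
import Mathlib

section
/- For every pairing π of a cyclic word of matrix entries arising from E[Tr[V^{2k}]] for a Gaussian matrix V, the product of Kronecker delta constraints imposed by π forces the first index to equal the last: E₀ = E_{2k}. More precisely: suppose indices E₀,...,E_{2k} ∈ Fin N are subject to, for each pair (i,j) in a perfect matching π of {0,...,2k-1}, the constraints E_i = E_{j+1} and E_{i+1} = E_j. Then E₀ = E_{2k}. -/
/-!
Follow the walk `i ↦ f i + 1` on positions `0, …, 2k`: the constraint `E_i = E_{f(i)+1}` says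
that `E` is constant along it as long as the walk has not reached the last position `2k`.
Sending `2k` back to `0` turns this walk into a permutation of `Fin (2k+1)`, so the orbit of `0`
returns to `0` and must pass through `2k`, the only preimage of `0`.
-/

open Function

theorem apply_eq_of_iterate_eq {α β : Type*} {h : α → α} {E : α → β} {t : α}
    (hE : ∀ x, x ≠ t → E (h x) = E x) : ∀ {n : ℕ} {a : α}, h^[n] a = t → E a = E t
  | 0, _, rfl => rfl
  | _ + 1, a, hn => by
    by_cases ha : a = t
    · rw [ha]
    · rw [← hE a ha]
      exact apply_eq_of_iterate_eq hE hn

theorem Function.Injective.exists_iterate_eq_of_apply_eq {α : Type*} [Finite α] {h : α → α}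
    (hinj : Injective h) {a t : α} (ht : h t = a) : ∃ n, h^[n] a = t := by
  obtain ⟨n, hn_pos, hn⟩ := hinj.mem_periodicPts a
  obtain ⟨m, rfl⟩ := Nat.exists_eq_add_one_of_ne_zero hn_pos.ne'
  refine ⟨m, hinj ?_⟩
  rw [ht, ← iterate_succ_apply' h m a]
  exact hn

def pairedSucc {n : ℕ} (f : Fin n → Fin n) : Fin (n + 1) → Fin (n + 1) :=
  Fin.lastCases 0 fun i => (f i).succ

section pairedSucc

variable {n : ℕ} (f : Fin n → Fin n)

@[simp]
theorem pairedSucc_last : pairedSucc f (Fin.last n) = 0 :=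
  Fin.lastCases_last

@[simp]
theorem pairedSucc_castSucc (i : Fin n) : pairedSucc f i.castSucc = (f i).succ :=
  Fin.lastCases_castSucc i

theorem pairedSucc_injective {f : Fin n → Fin n} (hf : Injective f) : Injective (pairedSucc f) := by
  intro x y hxy
  induction x using Fin.lastCases <;> induction y using Fin.lastCases <;>
    simp_all [eq_comm, hf.eq_iff]

end pairedSucc

theorem first_eq_last_of_matching_constraints_general (k N : ℕ)
    (f : Fin (2 * k) → Fin (2 * k))
    (hinv : Function.Involutive f)
    (E : Fin (2 * k + 1) → Fin N)
    (hconstr : ∀ i : Fin (2 * k),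
      E i.castSucc = E (f i).succ ∧ E i.succ = E (f i).castSucc) :
    E 0 = E (Fin.last (2 * k)) := by
  obtain ⟨n, hn⟩ :=
    (pairedSucc_injective hinv.injective).exists_iterate_eq_of_apply_eq (pairedSucc_last f)
  refine apply_eq_of_iterate_eq (fun x hx => ?_) hn
  obtain ⟨i, rfl⟩ := Fin.exists_castSucc_eq.2 hx
  rw [pairedSucc_castSucc]
  exact (hconstr i).1.symm

/-- If `π` is a perfect matching of `{0,…,2k-1}` (encoded by a fixed-point-free
involution `f`) and the indices `E₀,…,E_{2k}` satisfy the constraints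
`E_i = E_{f(i)+1}` and `E_{i+1} = E_{f(i)}` for every `i`, then `E₀ = E_{2k}`. -/
theorem first_eq_last_of_matching_constraints (k N : ℕ)
    (f : Fin (2 * k) → Fin (2 * k))
    (hinv : Function.Involutive f) (hfree : ∀ i, f i ≠ i)
    (E : Fin (2 * k + 1) → Fin N)
    (hconstr : ∀ i : Fin (2 * k),
      E i.castSucc = E (f i).succ ∧ E i.succ = E (f i).castSucc) :
    E 0 = E (Fin.last (2 * k)) :=
  first_eq_last_of_matching_constraints_general k N f hinv E hconstr
end

section
/- For a non-crossing perfect matching of 2k points with the index-identification constraints E_i = E_{j+1} and E_{i+1} = E_j for each matched pair (i,j), the number of equivalence classes of the indices E₀,...,E_{2k} (i.e., the number of free/independent index variables after imposing all constraints and the boundary identification) equals k + 1. -/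
/-!
Orient each outer identification `E_i ~ E_{j+1}` (for a pair `i < j`) from `E_{j+1}` to `E_i`.
Every `E_v` then has at most one parent, of smaller index, so these `k` identifications form a
forest on `2k + 1` vertices, with `k + 1` trees, one per root `E_0` or `E_{i+1}` with `i` a left
endpoint. Non-crossing makes the inner identifications `E_{i+1} ~ E_j` redundant: the points
strictly between `i` and `j` split into consecutive matched blocks, and the outer identifications
of these blocks walk from `E_{i+1}` to `E_j`.
-/

open Function Relation Finset

namespace ParentForest

variable {α : Type*} (p : α → α) (μ : α → ℕ)

def root (x : α) : α := p^[μ x] x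

variable {p μ}

theorem root_of_isFixedPt {x : α} (hx : IsFixedPt p x) : root p μ x = x :=
  iterate_fixed hx _

theorem eqvGen_root (x : α) : EqvGen (fun a b => a = p b) (root p μ x) x := by
  suffices ∀ n y, EqvGen (fun a b => a = p b) (p^[n] y) y from this _ x
  intro n
  induction n with
  | zero => exact fun y => .refl y
  | succ n ih =>
    intro y
    rw [iterate_succ_apply]
    exact .trans _ _ _ (ih (p y)) (.rel _ _ rfl)

variable (hμ : ∀ x, p x ≠ x → μ (p x) < μ x)
include hμ

theorem isFixedPt_iterate {n : ℕ} {x : α} (h : μ x ≤ n) : IsFixedPt p (p^[n] x) := by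
  induction n generalizing x with
  | zero => simpa [IsFixedPt] using fun hx => (hμ x hx).trans_le h
  | succ n ih =>
    by_cases hx : p x = x
    · rw [iterate_fixed hx]; exact hx
    · rw [iterate_succ_apply]; exact ih (by have := hμ x hx; omega)

theorem iterate_eq_root {n : ℕ} {x : α} (h : μ x ≤ n) : p^[n] x = root p μ x := by
  rw [← Nat.sub_add_cancel h, iterate_add_apply]
  exact iterate_fixed (isFixedPt_iterate hμ le_rfl) _

theorem root_apply (x : α) : root p μ (p x) = root p μ x := by
  by_cases hx : p x = x
  · rw [hx]
  · rw [← iterate_eq_root hμ (n := μ x) (hμ x hx).le, ← iterate_succ_apply,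
      iterate_eq_root hμ (Nat.le_succ _)]

theorem eqvGen_iff_root_eq {x y : α} :
    EqvGen (fun a b => a = p b) x y ↔ root p μ x = root p μ y := by
  constructor
  · intro h
    induction h with
    | rel a b hab => rw [hab, root_apply hμ]
    | refl => rfl
    | symm _ _ _ ih => exact ih.symm
    | trans _ _ _ _ _ ih₁ ih₂ => exact ih₁.trans ih₂
  · intro h
    exact .trans _ _ _ (.symm _ _ (eqvGen_root x)) (h ▸ eqvGen_root y)

theorem range_root : Set.range (root p μ) = fixedPoints p := by
  ext x
  refine ⟨?_, fun hx => ⟨x, root_of_isFixedPt hx⟩⟩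
  rintro ⟨y, rfl⟩
  exact isFixedPt_iterate hμ le_rfl

theorem card_quotient_eqvGen :
    Nat.card (Quotient (EqvGen.setoid (fun a b => a = p b))) = Nat.card (fixedPoints p) := by
  have hker : EqvGen.setoid (fun a b => a = p b) = Setoid.ker (root p μ) :=
    Setoid.ext fun _ _ => eqvGen_iff_root_eq hμ
  rw [hker, Nat.card_congr (Setoid.quotientKerEquivRange _), range_root hμ]

end ParentForest

namespace NoncrossingMatching

variable {n : ℕ}

def gapParent (f : Fin n → Fin n) : Fin (n + 1) → Fin (n + 1) :=
  Fin.cases 0 fun u => if f u < u then (f u).castSucc else u.succ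

abbrev ParentRel (f : Fin n → Fin n) (a b : Fin (n + 1)) : Prop := a = gapParent f b

def GapRel (f : Fin n → Fin n) (a b : Fin (n + 1)) : Prop :=
  ∃ i : Fin n, (a = i.castSucc ∧ b = (f i).succ) ∨ (a = i.succ ∧ b = (f i).castSucc)

variable {f : Fin n → Fin n}

theorem gapParent_lt_of_ne (v : Fin (n + 1)) (hv : gapParent f v ≠ v) :
    (gapParent f v : ℕ) < v := by
  cases v using Fin.cases with
  | zero => exact absurd rfl hv
  | succ u =>
    simp only [gapParent, Fin.cases_succ] at hv ⊢
    split_ifs at hv ⊢ with h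
    · simp only [Fin.val_succ, Fin.val_castSucc]; omega
    · exact absurd rfl hv

theorem castSucc_eq_gapParent_succ (hinv : Involutive f) {i : Fin n} (h : i < f i) :
    i.castSucc = gapParent f (f i).succ := by
  simp [gapParent, hinv i, h]

theorem isFixedPt_gapParent_succ_iff (hfree : ∀ i, f i ≠ i) (u : Fin n) :
    IsFixedPt (gapParent f) u.succ ↔ u < f u := by
  have := hfree u
  simp only [IsFixedPt, gapParent, Fin.cases_succ]
  split_ifs with h
  · refine iff_of_false (fun e => ?_) (lt_asymm h)
    rw [Fin.ext_iff, Fin.val_castSucc, Fin.val_succ] at e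
    exact absurd h (by rw [Fin.lt_def]; omega)
  · exact iff_of_true rfl (lt_of_le_of_ne (not_lt.1 h) this.symm)

section Noncrossing

variable (hinv : Involutive f) (hfree : ∀ i, f i ≠ i)
  (hnc : ¬ ∃ i l : Fin n, (i : ℕ) < (l : ℕ) ∧ (l : ℕ) < (f i : ℕ) ∧ (f i : ℕ) < (f l : ℕ))
include hinv hnc

theorem lt_apply_of_mem_arc {i x : Fin n} (h₁ : (i : ℕ) < x) (h₂ : (x : ℕ) < f i) :
    (i : ℕ) < f x ∧ (f x : ℕ) < f i := by
  have hxi : f x ≠ i := fun h => by rw [← h, hinv] at h₂; omega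
  have hxfi : f x ≠ f i := fun h => by rw [hinv.injective h] at h₁; omega
  refine ⟨lt_of_not_ge fun h => hnc ⟨f x, i, ?_⟩, lt_of_not_ge fun h => hnc ⟨i, x, ?_⟩⟩
  · rw [hinv]; exact ⟨lt_of_le_of_ne h (by simpa [Fin.val_inj] using hxi), h₁, h₂⟩
  · exact ⟨h₁, h₂, lt_of_le_of_ne h (by simpa [Fin.val_inj, eq_comm] using hxfi)⟩

/- The block of `[a, b)` starting at `a` is `[a, f a]`; peel it off with `E_a ~ E_{f a + 1}` and
recurse on `[f a + 1, b)`, which `f` preserves by non-crossing. -/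
include hfree in
theorem eqvGen_of_mapsTo_Ico {a b : ℕ} (hab : a ≤ b) (hb : b ≤ n)
    (hmaps : ∀ x : Fin n, a ≤ x → (x : ℕ) < b → a ≤ f x ∧ (f x : ℕ) < b) :
    EqvGen (ParentRel f) ⟨a, by omega⟩ ⟨b, by omega⟩ := by
  rcases hab.eq_or_lt with rfl | hlt
  · exact .refl _
  obtain ⟨x, rfl⟩ : ∃ x : Fin n, (x : ℕ) = a := ⟨⟨a, by omega⟩, rfl⟩
  have hfx := hmaps x le_rfl hlt
  have hx : (x : ℕ) < f x := lt_of_le_of_ne hfx.1 (Fin.val_ne_iff.2 (hfree x).symm)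
  have hrest := eqvGen_of_mapsTo_Ico (a := f x + 1) hfx.2 hb fun y h₁ h₂ => by
    have hy := hmaps y (by omega) h₂
    refine ⟨Nat.succ_le_of_lt (lt_of_not_ge fun hfy => ?_), hy.2⟩
    have hyx : f y ≠ x := fun h => by rw [← h, hinv] at h₁; omega
    have := lt_apply_of_mem_arc hinv hnc (i := x) (x := f y)
      (lt_of_le_of_ne hy.1 (Fin.val_ne_iff.2 hyx.symm))
      (lt_of_le_of_ne hfy fun h => by rw [hinv.injective (Fin.ext h)] at h₁; omega)
    rw [hinv] at this; omega
  exact .trans _ _ _ (.rel _ (f x).succ (castSucc_eq_gapParent_succ hinv hx)) hrest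
termination_by b - a

include hfree in
theorem eqvGen_succ_castSucc_apply {i : Fin n} (h : i < f i) :
    EqvGen (ParentRel f) i.succ (f i).castSucc :=
  eqvGen_of_mapsTo_Ico hinv hfree hnc (Nat.succ_le_of_lt h) (f i).isLt.le
    fun _ h₁ h₂ =>
      (lt_apply_of_mem_arc hinv hnc (Nat.lt_of_succ_le h₁) h₂).imp_left Nat.succ_le_of_lt

include hfree in
theorem eqvGen_setoid_gapRel :
    EqvGen.setoid (GapRel f) = EqvGen.setoid (ParentRel f) := by
  refine le_antisymm (Setoid.eqvGen_le ?_) (Setoid.eqvGen_le ?_)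
  · rintro _ _ ⟨i, ⟨rfl, rfl⟩ | ⟨rfl, rfl⟩⟩ <;> rcases lt_or_gt_of_ne (hfree i) with h | h
    · have := eqvGen_succ_castSucc_apply hinv hfree hnc (i := f i) (by rwa [hinv])
      rw [hinv] at this
      exact .symm _ _ this
    · exact .rel _ _ (castSucc_eq_gapParent_succ hinv h)
    · have := castSucc_eq_gapParent_succ hinv (i := f i) (by rwa [hinv])
      rw [hinv] at this
      exact .symm _ _ (.rel _ _ this)
    · exact eqvGen_succ_castSucc_apply hinv hfree hnc h
  · intro a b hab
    cases b using Fin.cases with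
    | zero => exact hab ▸ .refl _
    | succ u =>
      simp only [ParentRel, gapParent, Fin.cases_succ] at hab
      split_ifs at hab
      · exact .rel _ _ ⟨f u, .inl ⟨hab, by rw [hinv]⟩⟩
      · exact hab ▸ .refl _

end Noncrossing

theorem card_fixedPoints_gapParent (hfree : ∀ i, f i ≠ i) :
    Nat.card (fixedPoints (gapParent f)) = #{u | u < f u} + 1 := by
  classical
  rw [Nat.card_eq_fintype_card, Fintype.card_subtype, Fin.card_filter_univ_succ']
  simp [isFixedPt_gapParent_succ_iff hfree, show IsFixedPt (gapParent f) 0 from rfl, add_comm]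

theorem two_mul_card_filter_lt_apply (hinv : Involutive f) (hfree : ∀ i, f i ≠ i) :
    2 * #{u | u < f u} = n := by
  have hswap : #{u | f u < u} = #{u | u < f u} :=
    card_nbij' f f (fun u hu => by simpa [hinv u] using hu)
      (fun u hu => by simpa [hinv u] using hu) (fun u _ => hinv u) (fun u _ => hinv u)
  have hnot : #{u | ¬ u < f u} = #{u | f u < u} :=
    congrArg card (filter_congr fun u _ => by
      rw [not_lt, le_iff_lt_or_eq, or_iff_left (hfree u)])
  rw [two_mul]
  nth_rw 2 [← hswap]
  rw [← hnot, card_filter_add_card_filter_not, card_univ, Fintype.card_fin]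

end NoncrossingMatching

/-- For a non-crossing perfect matching of `2k` points (encoded by a fixed-point-free
involution `f`), the equivalence relation on the `2k+1` index variables `E₀,…,E_{2k}`
generated by the identifications `E_i ~ E_{f(i)+1}` and `E_{i+1} ~ E_{f(i)}`
has exactly `k + 1` equivalence classes. -/
theorem card_classes_noncrossing (k : ℕ)
    (f : Fin (2 * k) → Fin (2 * k))
    (hinv : Function.Involutive f) (hfree : ∀ i, f i ≠ i)
    (hnc : ¬ ∃ i l : Fin (2 * k),
      (i : ℕ) < (l : ℕ) ∧ (l : ℕ) < (f i : ℕ) ∧ (f i : ℕ) < (f l : ℕ)) :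
    Nat.card (Quotient (Relation.EqvGen.setoid
      (fun a b : Fin (2 * k + 1) => ∃ i : Fin (2 * k),
        (a = i.castSucc ∧ b = (f i).succ) ∨ (a = i.succ ∧ b = (f i).castSucc)))) =
      k + 1 := by
  change Nat.card (Quotient (EqvGen.setoid (NoncrossingMatching.GapRel f))) = k + 1
  rw [NoncrossingMatching.eqvGen_setoid_gapRel hinv hfree hnc,
    ParentForest.card_quotient_eqvGen (μ := Fin.val) NoncrossingMatching.gapParent_lt_of_ne,
    NoncrossingMatching.card_fixedPoints_gapParent hfree]
  have := NoncrossingMatching.two_mul_card_filter_lt_apply hinv hfree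
  omega
end

section
/- There is a constant C₁ such that for all real x, y, all η ∈ (0, 1/2), and C > 0: ∫_{−C}^{C} dα / (|x − α − iη| · |y − α − iη|) ≤ C₁ · |log η| / |x − y − iη|. -/
open Complex intervalIntegral

/-! Since `‖x - α - iη‖ ≥ max (|x - α|, η)`, a single propagator integrates over an interval of
length `L` to at most `2 ∫₀^L dt / max (t, η) = 2 (1 + log (L / η))`: the integrand is even and
decreasing in `|t|`, so no window of length `L` carries more than twice the mass of `[0, L]`. For
two propagators, the triangle inequality `‖x - y - iη‖ ≤ ‖x - α - iη‖ + ‖y - α - iη‖` splits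
`‖x - y - iη‖ / (‖x - α - iη‖ ‖y - α - iη‖)` into the sum of the two single propagators. -/

section EvenAntitone

variable {h : ℝ → ℝ}

theorem integral_le_integral_zero_sub_of_antitoneOn (hh : Continuous h)
    (hanti : AntitoneOn h (Set.Ici 0)) {a b : ℝ} (ha : 0 ≤ a) (hab : a ≤ b) :
    ∫ t in a..b, h t ≤ ∫ t in 0..b - a, h t :=
  calc ∫ t in a..b, h t = ∫ t in 0..b - a, h (t + a) := by
        simp only [integral_comp_add_right, zero_add, sub_add_cancel]
    _ ≤ ∫ t in 0..b - a, h t :=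
        integral_mono_on (sub_nonneg.2 hab) ((hh.comp (continuous_add_const a)).intervalIntegrable _ _)
          (hh.intervalIntegrable _ _) fun t ht => hanti ht.1 (by simp only [Set.mem_Ici]; linarith [ht.1])
            (le_add_of_nonneg_right ha)

theorem integral_zero_mono_right (hh : Continuous h) (hnn : ∀ t, 0 ≤ h t) {s L : ℝ}
    (hs : 0 ≤ s) (hsL : s ≤ L) : ∫ t in 0..s, h t ≤ ∫ t in 0..L, h t :=
  integral_mono_interval le_rfl hs hsL (Filter.Eventually.of_forall hnn) (hh.intervalIntegrable _ _)

theorem integral_le_two_mul_integral_zero_sub_of_even (hh : Continuous h) (heven : Function.Even h)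
    (hanti : AntitoneOn h (Set.Ici 0)) (hnn : ∀ t, 0 ≤ h t) {u v : ℝ} (huv : u ≤ v) :
    ∫ t in u..v, h t ≤ 2 * ∫ t in 0..v - u, h t := by
  have hreflect : ∀ a b, ∫ t in a..b, h t = ∫ t in -b..-a, h t := fun a b => by
    simpa only [heven _] using integral_comp_neg (a := a) (b := b) h
  have hbase : 0 ≤ ∫ t in 0..v - u, h t := integral_nonneg (sub_nonneg.2 huv) fun t _ => hnn t
  rcases le_or_gt 0 u with hu | hu
  · linarith [integral_le_integral_zero_sub_of_antitoneOn hh hanti hu huv]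
  rcases le_or_gt v 0 with hv | hv
  · have := integral_le_integral_zero_sub_of_antitoneOn hh hanti (neg_nonneg.2 hv) (neg_le_neg huv)
    rw [neg_sub_neg] at this
    rw [hreflect]
    linarith
  · have hneg : ∫ t in u..0, h t ≤ ∫ t in 0..v - u, h t := by
      rw [hreflect, neg_zero]
      exact integral_zero_mono_right hh hnn (by linarith) (by linarith)
    have hpos : ∫ t in 0..v, h t ≤ ∫ t in 0..v - u, h t :=
      integral_zero_mono_right hh hnn hv.le (by linarith)
    rw [← integral_add_adjacent_intervals (hh.intervalIntegrable u 0) (hh.intervalIntegrable 0 v)]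
    linarith

end EvenAntitone

section TruncatedInverse

variable {η : ℝ}

theorem continuous_inv_max_abs (hη : 0 < η) : Continuous fun t : ℝ => (max |t| η)⁻¹ :=
  (continuous_abs.max continuous_const).inv₀ fun _ => (lt_max_of_lt_right hη).ne'

theorem antitoneOn_inv_max_abs (hη : 0 < η) : AntitoneOn (fun t : ℝ => (max |t| η)⁻¹) (Set.Ici 0) :=
  fun s hs t ht hst => inv_anti₀ (lt_max_of_lt_right hη)
    (max_le_max_right η (by rwa [abs_of_nonneg hs, abs_of_nonneg (ht : 0 ≤ t)]))

theorem integral_inv_max_abs (hη : 0 < η) {L : ℝ} (hL : η ≤ L) :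
    ∫ t in 0..L, (max |t| η)⁻¹ = 1 + Real.log (L / η) := by
  have hint := (continuous_inv_max_abs hη).intervalIntegrable (μ := MeasureTheory.volume)
  rw [← integral_add_adjacent_intervals (hint 0 η) (hint η L)]
  congr 1
  · rw [integral_congr (g := fun _ => η⁻¹)]
    · simp [hη.ne']
    · intro t ht
      rw [Set.uIcc_of_le hη.le] at ht
      simp [abs_of_nonneg ht.1, max_eq_right ht.2]
  · rw [integral_congr (g := fun t => t⁻¹)]
    · exact integral_inv_of_pos hη (hη.trans_le hL)
    · intro t ht
      rw [Set.uIcc_of_le hL] at ht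
      simp [abs_of_nonneg (hη.le.trans ht.1), max_eq_left ht.1]

end TruncatedInverse

theorem max_abs_le_norm_sub_sub_I_mul (x α η : ℝ) : max |α - x| η ≤ ‖(x : ℂ) - α - I * η‖ := by
  refine max_le ?_ ?_
  · simpa [abs_sub_comm] using abs_re_le_norm ((x : ℂ) - α - I * η)
  · exact (le_abs_self η).trans (by simpa using abs_im_le_norm ((x : ℂ) - α - I * η))

theorem norm_sub_sub_I_mul_le_add (x y α η : ℝ) :
    ‖(x : ℂ) - y - I * η‖ ≤ ‖(x : ℂ) - α - I * η‖ + ‖(y : ℂ) - α - I * η‖ :=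
  calc ‖(x : ℂ) - y - I * η‖ = ‖((x : ℂ) - α - I * η) - ((y - α : ℝ) : ℂ)‖ := by
        push_cast; ring_nf
    _ ≤ ‖(x : ℂ) - α - I * η‖ + |y - α| := by
        rw [← Real.norm_eq_abs, ← Complex.norm_real]
        exact norm_sub_le _ _
    _ ≤ ‖(x : ℂ) - α - I * η‖ + ‖(y : ℂ) - α - I * η‖ := by
        gcongr
        exact (abs_sub_comm y α).le.trans
          ((le_max_left _ _).trans (max_abs_le_norm_sub_sub_I_mul y α η))

section Propagator

variable {η : ℝ}

theorem norm_sub_sub_I_mul_pos (hη : 0 < η) (x α : ℝ) : 0 < ‖(x : ℂ) - α - I * η‖ :=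
  hη.trans_le ((le_max_right _ _).trans (max_abs_le_norm_sub_sub_I_mul x α η))

theorem continuous_inv_norm_sub_sub_I_mul (hη : 0 < η) (x : ℝ) :
    Continuous fun α : ℝ => ‖(x : ℂ) - α - I * η‖⁻¹ :=
  Continuous.inv₀ (by fun_prop) fun α => (norm_sub_sub_I_mul_pos hη x α).ne'

theorem integral_inv_norm_sub_sub_I_mul_le (hη : 0 < η) (x : ℝ) {a b : ℝ} (hab : a ≤ b) :
    ∫ α in a..b, ‖(x : ℂ) - α - I * η‖⁻¹ ≤ 2 * (1 + Real.log ((b - a + η) / η)) :=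
  calc ∫ α in a..b, ‖(x : ℂ) - α - I * η‖⁻¹ ≤ ∫ α in a..b, (max |α - x| η)⁻¹ :=
        integral_mono_on hab ((continuous_inv_norm_sub_sub_I_mul hη x).intervalIntegrable _ _)
          (((continuous_inv_max_abs hη).comp (continuous_sub_right x)).intervalIntegrable _ _)
          fun α _ => inv_anti₀ (lt_max_of_lt_right hη) (max_abs_le_norm_sub_sub_I_mul x α η)
    _ = ∫ t in a - x..b - x, (max |t| η)⁻¹ := integral_comp_sub_right (fun t => (max |t| η)⁻¹) x
    _ ≤ 2 * ∫ t in 0..b - a, (max |t| η)⁻¹ := by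
        simpa only [sub_sub_sub_cancel_right] using
          integral_le_two_mul_integral_zero_sub_of_even (continuous_inv_max_abs hη)
            (fun t => by simp only [abs_neg]) (antitoneOn_inv_max_abs hη)
            (fun t => by positivity) (sub_le_sub_right hab x)
    _ ≤ 2 * ∫ t in 0..b - a + η, (max |t| η)⁻¹ := by
        gcongr
        exact integral_zero_mono_right (continuous_inv_max_abs hη)
          (fun t => by positivity) (sub_nonneg.2 hab)
          (le_add_of_nonneg_right hη.le)
    _ = 2 * (1 + Real.log ((b - a + η) / η)) := by
        rw [integral_inv_max_abs hη (le_add_of_nonneg_left (sub_nonneg.2 hab))]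

theorem integral_inv_mul_norm_sub_sub_I_mul_le (hη : 0 < η) (x y : ℝ) {a b : ℝ} (hab : a ≤ b) :
    ∫ α in a..b, (‖(x : ℂ) - α - I * η‖ * ‖(y : ℂ) - α - I * η‖)⁻¹ * ‖(x : ℂ) - y - I * η‖ ≤
      4 * (1 + Real.log ((b - a + η) / η)) := by
  have hx := continuous_inv_norm_sub_sub_I_mul hη x
  have hy := continuous_inv_norm_sub_sub_I_mul hη y
  calc _ ≤ ∫ α in a..b, (‖(x : ℂ) - α - I * η‖⁻¹ + ‖(y : ℂ) - α - I * η‖⁻¹) := by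
        refine integral_mono_on hab ?_ ((hx.add hy).intervalIntegrable _ _) fun α _ => ?_
        · exact (((hx.mul hy).mul continuous_const).congr fun α => by
            rw [Pi.mul_apply, Pi.mul_apply, mul_inv]).intervalIntegrable _ _
        have hpx := norm_sub_sub_I_mul_pos hη x α
        have hpy := norm_sub_sub_I_mul_pos hη y α
        calc _ ≤ (‖(x : ℂ) - α - I * η‖ * ‖(y : ℂ) - α - I * η‖)⁻¹ *
              (‖(x : ℂ) - α - I * η‖ + ‖(y : ℂ) - α - I * η‖) := by
              gcongr; exact norm_sub_sub_I_mul_le_add x y α η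
          _ = _ := by field_simp; ring
    _ = (∫ α in a..b, ‖(x : ℂ) - α - I * η‖⁻¹) + ∫ α in a..b, ‖(y : ℂ) - α - I * η‖⁻¹ :=
        integral_add (hx.intervalIntegrable _ _) (hy.intervalIntegrable _ _)
    _ ≤ 4 * (1 + Real.log ((b - a + η) / η)) := by
        linarith [integral_inv_norm_sub_sub_I_mul_le hη x hab,
          integral_inv_norm_sub_sub_I_mul_le hη y hab]

end Propagator

theorem one_add_log_div_le_mul_abs_log {L η : ℝ} (hL : 0 ≤ L) (hη : 0 < η) (hη2 : η < 1 / 2) :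
    1 + Real.log ((L + η) / η) ≤ ((1 + Real.log (L + 1)) / Real.log 2 + 1) * |Real.log η| := by
  have hlog2 : 0 < Real.log 2 := Real.log_pos one_lt_two
  have habs : |Real.log η| = -Real.log η := abs_of_neg (Real.log_neg hη (by linarith))
  have hlog2_le : Real.log 2 ≤ |Real.log η| := by
    rw [habs, ← Real.log_inv]
    exact Real.log_le_log two_pos (by rw [le_inv_comm₀ two_pos hη]; linarith)
  have hnum : 0 ≤ 1 + Real.log (L + 1) := by
    linarith [Real.log_nonneg (by linarith : (1 : ℝ) ≤ L + 1)]
  have hone : 1 + Real.log (L + 1) ≤ (1 + Real.log (L + 1)) / Real.log 2 * |Real.log η| := by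
    rw [div_mul_eq_mul_div, le_div_iff₀ hlog2]
    exact mul_le_mul_of_nonneg_left hlog2_le hnum
  have hsplit : Real.log ((L + η) / η) ≤ Real.log (L + 1) + |Real.log η| := by
    rw [Real.log_div (by linarith) hη.ne', habs]
    linarith [Real.log_le_log (by linarith) (by linarith : L + η ≤ L + 1)]
  linarith

/-- There is a constant `C₁` (depending only on `C`) such that for all real `x, y` and
all `η ∈ (0, 1/2)`:
`∫_{−C}^{C} dα / (|x − α − iη| · |y − α − iη|) ≤ C₁ · |log η| / |x − y − iη|`. -/
theorem two_propagator_log_bound (C : ℝ) (hC : 0 < C) :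
    ∃ C₁ : ℝ, ∀ x y η : ℝ, 0 < η → η < 1 / 2 →
      ∫ α in (-C)..C,
          (‖(x : ℂ) - α - Complex.I * η‖ * ‖(y : ℂ) - α - Complex.I * η‖)⁻¹ ≤
        C₁ * |Real.log η| / ‖(x : ℂ) - y - Complex.I * η‖ := by
  refine ⟨4 * ((1 + Real.log (2 * C + 1)) / Real.log 2 + 1), fun x y η hη hη2 => ?_⟩
  rw [le_div_iff₀ (norm_sub_sub_I_mul_pos hη x y), ← integral_mul_const]
  have hlen : C - -C = 2 * C := by ring
  calc _ ≤ 4 * (1 + Real.log ((C - -C + η) / η)) :=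
        integral_inv_mul_norm_sub_sub_I_mul_le hη x y (by linarith)
    _ ≤ _ := by
        rw [hlen, mul_assoc]
        gcongr
        exact one_add_log_div_le_mul_abs_log (by linarith) hη hη2
end

section
/- For real α, η > 0 and ω̄ ∈ (0,1), with Θ(α,η) = ∫₀¹ dω/(ω − α − iη) and Θ(ω̄) = lim_{η'→0⁺} ∫₀¹ dω/(ω − ω̄ − iη'), the difference satisfies |Θ(α,η) − Θ(ω̄)| ≤ |ω̄ − α − iη| · (1/|1 − α − iη| + 1/|1 − ω̄| + 1/|α + iη| + 1/|ω̄|). -/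
/-!
For `Im z ≠ 0`, `∫₀¹ dω/(ω − z) = log (1 − z) − log (−z)` (principal branch), and when `Im z > 0`
both `1 − z` and `−z` lie in the open lower half-plane. There `log` satisfies
`‖log z₁ − log z₂‖ ≤ ‖z₁ − z₂‖ (1/‖z₁‖ + 1/‖z₂‖)`: in polar coordinates the modulus part is
`|log s − log t| ≤ |s − t| (1/s + 1/t)`, and the argument difference `θ`, which is at most `π`,
is controlled by the chord through `θ² ≤ π²/2 (1 − cos θ)`. The resulting bound at `ω₀ + iη'`
passes to the limit `η' → 0⁺` since its right side is continuous at `ω₀ ∈ (0, 1)`.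
-/

open Complex intervalIntegral Filter
open scoped Real

namespace Real

theorem log_sub_log_le_abs_sub_mul {s t : ℝ} (hs : 0 < s) (ht : 0 < t) :
    log s - log t ≤ |s - t| * (1 / s + 1 / t) := by
  have hlog := log_le_sub_one_of_pos (div_pos hs ht)
  rw [log_div hs.ne' ht.ne', div_sub_one ht.ne'] at hlog
  calc log s - log t ≤ (s - t) / t := hlog
    _ ≤ |s - t| / t := by gcongr; exact le_abs_self _
    _ ≤ |s - t| * (1 / s + 1 / t) := by
      rw [mul_add, mul_one_div, mul_one_div]
      linarith [div_nonneg (abs_nonneg (s - t)) hs.le]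

theorem abs_log_sub_log_le {s t : ℝ} (hs : 0 < s) (ht : 0 < t) :
    |log s - log t| ≤ |s - t| * (1 / s + 1 / t) := by
  refine abs_sub_le_iff.2 ⟨log_sub_log_le_abs_sub_mul hs ht, ?_⟩
  simpa only [abs_sub_comm, add_comm] using log_sub_log_le_abs_sub_mul ht hs

theorem sq_le_mul_one_sub_cos {θ : ℝ} (hθ : |θ| ≤ π) : θ ^ 2 ≤ π ^ 2 / 2 * (1 - cos θ) := by
  have := cos_le_one_sub_mul_cos_sq hθ
  have hπ := pi_pos
  calc θ ^ 2 = π ^ 2 / 2 * (2 / π ^ 2 * θ ^ 2) := by field_simp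
    _ ≤ π ^ 2 / 2 * (1 - cos θ) := by gcongr; linarith

end Real

namespace Complex

theorem norm_sub_sq_eq_polar (z w : ℂ) :
    ‖z - w‖ ^ 2 = (‖z‖ - ‖w‖) ^ 2 + 2 * ‖z‖ * ‖w‖ * (1 - Real.cos (z.arg - w.arg)) := by
  have hcos : ‖z‖ * ‖w‖ * Real.cos (z.arg - w.arg) = z.re * w.re + z.im * w.im := by
    rw [Real.cos_sub, ← norm_mul_cos_arg z, ← norm_mul_cos_arg w, ← norm_mul_sin_arg z,
      ← norm_mul_sin_arg w]
    ring
  have hnorm (u : ℂ) : ‖u‖ ^ 2 = u.re ^ 2 + u.im ^ 2 := by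
    rw [Complex.sq_norm, normSq_apply]; ring
  rw [hnorm, sub_re, sub_im]
  linear_combination 2 * hcos - hnorm z - hnorm w

theorem norm_log_sub_log_sq (z w : ℂ) :
    ‖log z - log w‖ ^ 2 = (Real.log ‖z‖ - Real.log ‖w‖) ^ 2 + (z.arg - w.arg) ^ 2 := by
  rw [Complex.sq_norm, normSq_apply, sub_re, sub_im, log_re, log_re, log_im, log_im]
  ring

theorem norm_log_sub_log_le {z w : ℂ} (hz : z ≠ 0) (hw : w ≠ 0)
    (harg : |z.arg - w.arg| ≤ π) :
    ‖log z - log w‖ ≤ ‖z - w‖ * (1 / ‖z‖ + 1 / ‖w‖) := by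
  have hr₁ : 0 < ‖z‖ := norm_pos_iff.2 hz
  have hr₂ : 0 < ‖w‖ := norm_pos_iff.2 hw
  set S := 1 / ‖z‖ + 1 / ‖w‖
  have hmodulus : (Real.log ‖z‖ - Real.log ‖w‖) ^ 2 ≤ (‖z‖ - ‖w‖) ^ 2 * S ^ 2 := by
    have := pow_le_pow_left₀ (abs_nonneg _) (Real.abs_log_sub_log_le hr₁ hr₂) 2
    rwa [sq_abs, mul_pow, sq_abs] at this
  have hS : 4 ≤ ‖z‖ * ‖w‖ * S ^ 2 := by
    have : ‖z‖ * ‖w‖ * S ^ 2 - 4 = (‖z‖ - ‖w‖) ^ 2 / (‖z‖ * ‖w‖) := by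
      simp only [S]; field_simp; ring
    have : 0 ≤ (‖z‖ - ‖w‖) ^ 2 / (‖z‖ * ‖w‖) := by positivity
    linarith
  have hangle : (z.arg - w.arg) ^ 2 ≤ 2 * ‖z‖ * ‖w‖ * (1 - Real.cos (z.arg - w.arg)) * S ^ 2 := by
    have hcos : 0 ≤ 1 - Real.cos (z.arg - w.arg) := by linarith [Real.cos_le_one (z.arg - w.arg)]
    have hπ : π ^ 2 / 2 ≤ 8 := by nlinarith [Real.pi_le_four, Real.pi_pos]
    nlinarith [Real.sq_le_mul_one_sub_cos harg]
  refine (pow_le_pow_iff_left₀ (norm_nonneg _) (by positivity) two_ne_zero).1 ?_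
  rw [norm_log_sub_log_sq, mul_pow, norm_sub_sq_eq_polar, add_mul]
  exact add_le_add hmodulus hangle

theorem abs_arg_sub_arg_le_pi_of_im_neg {z w : ℂ} (hz : z.im < 0) (hw : w.im < 0) :
    |z.arg - w.arg| ≤ π := by
  have hz₀ := arg_neg_iff.2 hz
  have hw₀ := arg_neg_iff.2 hw
  have hzπ := neg_pi_lt_arg z
  have hwπ := neg_pi_lt_arg w
  rw [abs_le]; constructor <;> linarith

theorem norm_log_sub_log_le_of_im_neg {z w : ℂ} (hz : z.im < 0) (hw : w.im < 0) :
    ‖log z - log w‖ ≤ ‖z - w‖ * (1 / ‖z‖ + 1 / ‖w‖) :=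
  norm_log_sub_log_le (by rintro rfl; simp at hz) (by rintro rfl; simp at hw)
    (abs_arg_sub_arg_le_pi_of_im_neg hz hw)

end Complex

theorem integral_inv_ofReal_sub {z : ℂ} (hz : z.im ≠ 0) (a b : ℝ) :
    ∫ ω in a..b, ((ω : ℂ) - z)⁻¹ = log (b - z) - log (a - z) := by
  have hslit (ω : ℝ) : (ω : ℂ) - z ∈ slitPlane := Or.inr (by simpa using hz)
  refine integral_eq_sub_of_hasDerivAt (f := fun t : ℝ => log ((t : ℂ) - z)) (fun ω _ => ?_) ?_
  · simpa using ((hasDerivAt_id (ω : ℂ)).sub_const z).clog (hslit ω) |>.comp_ofReal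
  · exact ((continuous_ofReal.sub continuous_const).inv₀
      fun ω => slitPlane_ne_zero (hslit ω)).intervalIntegrable _ _

theorem norm_integral_inv_ofReal_sub_sub_le {z w : ℂ} (hz : 0 < z.im) (hw : 0 < w.im) :
    ‖(∫ ω in (0 : ℝ)..1, ((ω : ℂ) - z)⁻¹) - ∫ ω in (0 : ℝ)..1, ((ω : ℂ) - w)⁻¹‖ ≤
      ‖w - z‖ * (1 / ‖1 - z‖ + 1 / ‖1 - w‖ + 1 / ‖z‖ + 1 / ‖w‖) := by
  rw [integral_inv_ofReal_sub hz.ne', integral_inv_ofReal_sub hw.ne']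
  have h₁ := norm_log_sub_log_le_of_im_neg (z := 1 - z) (w := 1 - w) (by simpa) (by simpa)
  have h₂ := norm_log_sub_log_le_of_im_neg (z := -z) (w := -w) (by simpa) (by simpa)
  rw [sub_sub_sub_cancel_left] at h₁
  rw [neg_sub_neg, norm_neg, norm_neg] at h₂
  rw [ofReal_one, ofReal_zero, zero_sub, zero_sub, sub_sub_sub_comm]
  linarith [norm_sub_le (log (1 - z) - log (1 - w)) (log (-z) - log (-w))]

/-- With `Θ(α,η) = ∫₀¹ dω/(ω − α − iη)` and `Θ(ω₀)` the boundary value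
`lim_{η'→0⁺} ∫₀¹ dω/(ω − ω₀ − iη')`, one has
`|Θ(α,η) − Θ(ω₀)| ≤ |ω₀ − α − iη| (1/|1−α−iη| + 1/|1−ω₀| + 1/|α+iη| + 1/|ω₀|)`. -/
theorem theta_difference_bound (α η ω₀ : ℝ) (hη : 0 < η)
    (hω₀ : ω₀ ∈ Set.Ioo (0 : ℝ) 1) (L : ℂ)
    (hL : Tendsto (fun η' : ℝ => ∫ ω in (0 : ℝ)..1, ((ω : ℂ) - ω₀ - Complex.I * η')⁻¹)
      (nhdsWithin 0 (Set.Ioi 0)) (nhds L)) :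
    ‖(∫ ω in (0 : ℝ)..1, ((ω : ℂ) - α - Complex.I * η)⁻¹) - L‖ ≤
      ‖(ω₀ : ℂ) - α - Complex.I * η‖ *
        (1 / ‖(1 : ℂ) - α - Complex.I * η‖ + 1 / |1 - ω₀| +
          1 / ‖(α : ℂ) + Complex.I * η‖ + 1 / |ω₀|) := by
  simp only [sub_sub] at hL ⊢
  set z : ℂ := α + I * η
  set w : ℝ → ℂ := fun η' => ω₀ + I * η'
  have hz : 0 < z.im := by simpa [z]
  have hw : Tendsto w (nhdsWithin 0 (Set.Ioi 0)) (nhds ω₀) :=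
    ((by fun_prop : Continuous w).tendsto' 0 ω₀ (by simp [w])).mono_left nhdsWithin_le_nhds
  have hnorm₀ : ‖(ω₀ : ℂ)‖ = |ω₀| := norm_real ω₀
  have hnorm₁ : ‖1 - (ω₀ : ℂ)‖ = |1 - ω₀| := by rw [← ofReal_one, ← ofReal_sub, norm_real]; rfl
  have hbound : ContinuousAt
      (fun w : ℂ => ‖w - z‖ * (1 / ‖1 - z‖ + 1 / ‖1 - w‖ + 1 / ‖z‖ + 1 / ‖w‖)) ω₀ := by
    have h₀ : ‖(ω₀ : ℂ)‖ ≠ 0 := by rw [hnorm₀]; exact (abs_pos_of_pos hω₀.1).ne'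
    have h₁ : ‖1 - (ω₀ : ℂ)‖ ≠ 0 := by rw [hnorm₁]; exact (abs_pos_of_pos (sub_pos.2 hω₀.2)).ne'
    fun_prop (disch := assumption)
  have hev : ∀ᶠ η' in nhdsWithin (0 : ℝ) (Set.Ioi 0),
      ‖(∫ ω in (0 : ℝ)..1, ((ω : ℂ) - z)⁻¹) - ∫ ω in (0 : ℝ)..1, ((ω : ℂ) - w η')⁻¹‖ ≤
        ‖w η' - z‖ * (1 / ‖1 - z‖ + 1 / ‖1 - w η'‖ + 1 / ‖z‖ + 1 / ‖w η'‖) :=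
    eventually_mem_nhdsWithin.mono fun η' hη' =>
      norm_integral_inv_ofReal_sub_sub_le hz (by simpa [w] using hη')
  have hlim :=
    le_of_tendsto_of_tendsto (tendsto_const_nhds.sub hL).norm (hbound.tendsto.comp hw) hev
  rwa [hnorm₀, hnorm₁] at hlim
end
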